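/- arXiv:1003.4591 — 4 statements merged into one kernel-verified Lean document; each statement's English description precedes it below -/
import Mathlib

section
/- Given group-valued functions satisfying g^{αβ}_P(x) g^{ij(β)}_{Q,x}(y) = g^{ij(α)}_{Q,x}(y) g^{αβ}_P(φ^{ij}_y(x)), the combined functions g^{(αi)(βj)}_{++}(x,y) := g^{αβ}_P(x) g^{ij(β)}_{Q,x}(y) satisfy the twisted cocycle relation g^{(αi)(γk)}_{++}(x,y) = g^{(αi)(βj)}_{++}(x,y) · g^{(βj)(γk)}_{++}(φ^{ij}_y(x), y), provided g^{αβ}_P satisfies the ordinary cocycle relation and g^{ij(α)}_{Q,x} satisfies the twisted cocycle relation g^{ik(α)}_{Q,x}(y) = g^{ij(α)}_{Q,x}(y) · g^{jk(α)}_{Q,φ^{ij}_y(x)}(y). -/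
/-- The combined transition functions `g₊₊^{(αi)(βj)}(x,y) = gP^{αβ}(x) * gQ^{ij(β)}_x(y)`
of the total twisted bundle of a principal composite bundle satisfy the twisted cocycle
relation, given the ordinary cocycle relation for `gP`, the twisted cocycle relation for
`gQ`, and the intertwining relation between `gP` and `gQ`. -/
theorem total_twisted_cocycle {G : Type*} [Group G] {M R : Type*} {ιM ιR : Type*}
    (φ : ιR → ιR → R → M → M)
    (gP : ιM → ιM → M → G)
    (gQ : ιR → ιR → ιM → M → R → G)
    (hφ : ∀ (i j k : ιR) (y : R) (x : M), φ i k y x = φ j k y (φ i j y x))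
    (hP : ∀ (α β γ : ιM) (x : M), gP α β x * gP β γ x = gP α γ x)
    (hQ : ∀ (i j k : ιR) (α : ιM) (x : M) (y : R),
      gQ i k α x y = gQ i j α x y * gQ j k α (φ i j y x) y)
    (hint : ∀ (α β : ιM) (i j : ιR) (x : M) (y : R),
      gP α β x * gQ i j β x y = gQ i j α x y * gP α β (φ i j y x)) :
    ∀ (α β γ : ιM) (i j k : ιR) (x : M) (y : R),
      gP α γ x * gQ i k γ x y =
        (gP α β x * gQ i j β x y) * (gP β γ (φ i j y x) * gQ j k γ (φ i j y x) y) := by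
  intro α β γ i j k x y
  rw [← hP α β γ x, hQ i j k γ x y, mul_assoc, ← mul_assoc (gP β γ x),
    hint β γ i j x y]
  simp [mul_assoc]
end

section
/- If E'(s) + [A(s), E(s)] = λ(s)·I, then the solution T of T'(s) = T(s)(A(s) + E(s)), T(0) = I, is T(s) = exp(∫₀^s Λ(t) dt) · W(s) U(s), where Λ(t) = ∫₀^t λ(u) du, W solves W'(s) = W(s) E(0), i.e. W(s) = e^{s E(0)}, and U solves U' = U A, U(0) = I. -/
attribute [local instance] Matrix.linftyOpNormedRing Matrix.linftyOpNormedAlgebra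

open Set in
theorem mat_ode_unique {n : ℕ} (B f g : ℝ → Matrix (Fin n) (Fin n) ℂ)
    (hB : ContinuousOn B (Set.Icc 0 1))
    (hf : ∀ s ∈ Set.Icc (0:ℝ) 1, HasDerivAt f (f s * B s) s)
    (hg : ∀ s ∈ Set.Icc (0:ℝ) 1, HasDerivAt g (g s * B s) s)
    (h0 : f 0 = g 0) : ∀ s ∈ Set.Icc (0:ℝ) 1, f s = g s := by
  obtain ⟨C, hC⟩ := isCompact_Icc.exists_bound_of_continuousOn hB
  set p : ℝ → ℝ := fun t => max 0 (min t 1) with hp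
  have hpmem : ∀ t, p t ∈ Icc (0:ℝ) 1 := fun t =>
    ⟨le_max_left _ _, max_le (by norm_num) (min_le_right _ _)⟩
  have hpeq : ∀ t ∈ Icc (0:ℝ) 1, p t = t := fun t ht => by
    simp [hp, min_eq_left ht.2, max_eq_right ht.1]
  set v : ℝ → Matrix (Fin n) (Fin n) ℂ → Matrix (Fin n) (Fin n) ℂ :=
    fun t x => x * B (p t) with hv
  have hlip : ∀ t, LipschitzOnWith (max C 0).toNNReal (v t) univ := by
    intro t
    apply LipschitzWith.lipschitzOnWith
    apply LipschitzWith.of_dist_le_mul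
    intro x y
    rw [dist_eq_norm, dist_eq_norm, hv]
    calc ‖x * B (p t) - y * B (p t)‖ = ‖(x - y) * B (p t)‖ := by rw [sub_mul]
    _ ≤ ‖x - y‖ * ‖B (p t)‖ := norm_mul_le _ _
    _ ≤ ‖x - y‖ * C := by
        exact mul_le_mul_of_nonneg_left (hC _ (hpmem t)) (norm_nonneg _)
    _ ≤ _ := by
        rw [mul_comm]
        refine mul_le_mul_of_nonneg_right ?_ (norm_nonneg _)
        simp [Real.coe_toNNReal']
  have := ODE_solution_unique_of_mem_Icc_right (v := v) (s := fun _ => univ)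
    (K := (max C 0).toNNReal) (a := 0) (b := 1)
    (f := f) (g := g) (fun t _ => hlip t)
    (fun t ht => (hf t ht).continuousAt.continuousWithinAt)
    (fun t ht => by
      have h := (hf t (Ico_subset_Icc_self ht)).hasDerivWithinAt (s := Ici t)
      simpa [hv, hpeq t (Ico_subset_Icc_self ht)] using h)
    (fun t _ => mem_univ _)
    (fun t ht => (hg t ht).continuousAt.continuousWithinAt)
    (fun t ht => by
      have h := (hg t (Ico_subset_Icc_self ht)).hasDerivWithinAt (s := Ici t)
      simpa [hv, hpeq t (Ico_subset_Icc_self ht)] using h)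
    (fun t _ => mem_univ _) h0
  exact fun s hs => this hs

/-- If `E' + [A,E] = λ • 1`, then the solution `T` of `T' = T (A + E)`, `T 0 = 1`,
splits as `T s = exp(∫₀ˢ ∫₀ᵗ λ(u) du dt) • (e^{s E 0} * U s)`, where `U' = U A`,
`U 0 = 1`; in particular when `λ ≡ 0` the total non-abelian phase splits exactly as
the product of the dynamical phase `e^{s E 0}` and the geometric phase `U s`. -/
theorem phase_separation_with_abelian_term {n : ℕ}
    (A E T U : ℝ → Matrix (Fin n) (Fin n) ℂ) (lam : ℝ → ℂ)
    (hA : Continuous A) (hlam : Continuous lam)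
    (hE : ∀ s ∈ Set.Icc (0:ℝ) 1,
      HasDerivAt E (lam s • (1 : Matrix (Fin n) (Fin n) ℂ)
        - (A s * E s - E s * A s)) s)
    (hT : ∀ s ∈ Set.Icc (0:ℝ) 1, HasDerivAt T (T s * (A s + E s)) s) (hT0 : T 0 = 1)
    (hU : ∀ s ∈ Set.Icc (0:ℝ) 1, HasDerivAt U (U s * A s) s) (hU0 : U 0 = 1) :
    ∀ s ∈ Set.Icc (0:ℝ) 1,
      T s = Complex.exp (∫ t in (0:ℝ)..s, ∫ u in (0:ℝ)..t, lam u) •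
        (NormedSpace.exp (s • E 0) * U s) := by
  set Λ : ℝ → ℂ := fun s => ∫ u in (0:ℝ)..s, lam u with hΛdef
  have hΛ : ∀ s : ℝ, HasDerivAt Λ (lam s) s := fun s =>
    (hlam.integral_hasStrictDerivAt 0 s).hasDerivAt
  have hΛcont : Continuous Λ :=
    intervalIntegral.continuous_primitive (fun a b => hlam.intervalIntegrable a b) 0
  set μ : ℝ → ℂ := fun s => ∫ t in (0:ℝ)..s, Λ t with hμdef
  have hμ : ∀ s : ℝ, HasDerivAt μ (Λ s) s := fun s =>
    (hΛcont.integral_hasStrictDerivAt 0 s).hasDerivAt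
  -- Step A: U s * E s = (E 0 + Λ s • 1) * U s
  set G : ℝ → Matrix (Fin n) (Fin n) ℂ :=
    fun s => U s * E s - (E 0 + Λ s • 1) * U s with hGdef
  have hG0 : G 0 = 0 := by
    simp [hGdef, hΛdef, hU0, intervalIntegral.integral_same]
  have hG' : ∀ s ∈ Set.Icc (0:ℝ) 1, HasDerivAt G (G s * A s) s := by
    intro s hs
    have h1 := (hU s hs).mul (hE s hs)
    have h2 : HasDerivAt (fun t => E 0 + Λ t • (1 : Matrix (Fin n) (Fin n) ℂ))
        (lam s • (1 : Matrix (Fin n) (Fin n) ℂ)) s :=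
      ((hΛ s).smul_const (1 : Matrix (Fin n) (Fin n) ℂ)).const_add (E 0)
    have h3 := h2.mul (hU s hs)
    have h4 := h1.sub h3
    refine h4.congr_deriv ?_
    simp only [hGdef, mul_sub, sub_mul, add_mul, mul_add, mul_one, one_mul,
      mul_smul_comm, smul_mul_assoc, smul_smul, mul_assoc, sub_mul]
    abel
  have hzero : ∀ s ∈ Set.Icc (0:ℝ) 1,
      HasDerivAt (fun _ : ℝ => (0 : Matrix (Fin n) (Fin n) ℂ))
        ((0 : Matrix (Fin n) (Fin n) ℂ) * A s) s := fun s _ => by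
    rw [zero_mul]; exact hasDerivAt_const s (0 : Matrix (Fin n) (Fin n) ℂ)
  have hGzero := mat_ode_unique A G (fun _ => 0) hA.continuousOn hG' hzero (by simp [hG0])
  have hUE : ∀ s ∈ Set.Icc (0:ℝ) 1, U s * E s = (E 0 + Λ s • 1) * U s := by
    intro s hs
    have := hGzero s hs
    rw [hGdef] at this
    exact sub_eq_zero.mp this
  -- Step B: the candidate solution
  set S : ℝ → Matrix (Fin n) (Fin n) ℂ :=
    fun s => Complex.exp (μ s) • (NormedSpace.exp (s • E 0) * U s) with hSdef
  have hS0 : S 0 = 1 := by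
    simp [hSdef, hμdef, hU0, intervalIntegral.integral_same, NormedSpace.exp_zero]
  have hS' : ∀ s ∈ Set.Icc (0:ℝ) 1, HasDerivAt S (S s * (A s + E s)) s := by
    intro s hs
    have hexp : HasDerivAt (fun u : ℝ => NormedSpace.exp (u • E 0))
        (NormedSpace.exp (s • E 0) * E 0) s := by
      have h := hasDerivAt_exp_smul_const (𝕂 := ℝ) (E 0) s
      exact h
    have hmul := hexp.mul (hU s hs)
    have hscal : HasDerivAt (fun t => Complex.exp (μ t))
        (Complex.exp (μ s) * Λ s) s := (hμ s).cexp
    have hcomb := hscal.smul hmul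
    refine hcomb.congr_deriv ?_
    rw [hSdef]
    simp only [smul_mul_assoc, mul_add, mul_assoc, hUE s hs]
    simp only [add_mul, smul_mul_assoc, one_mul, mul_add, smul_add, smul_smul,
      mul_smul_comm, ← mul_assoc]
    abel
  -- conclude by uniqueness
  have hBcont : ContinuousOn (fun s => A s + E s) (Set.Icc (0:ℝ) 1) :=
    hA.continuousOn.add (fun s hs => (hE s hs).continuousAt.continuousWithinAt)
  have := mat_ode_unique (fun s => A s + E s) T S hBcont hT hS' (by rw [hT0, hS0])
  intro s hs
  exact this s hs
end

section
/- Composite Stokes theorem (ODE form): let A, B : [0,1] → M_n(ℂ) be continuous with B continuously differentiable, let U solve U' = U A, U(0)=I, let Ṽ solve Ṽ' = Ṽ B(0), Ṽ(0)=I (constant generator B(0)), and let T solve T' = T(A+B), T(0)=I. Then T(s) = P exp(∫₀^s Ṽ(t) [U(t)B(t)U(t)^{-1} − B(0)] Ṽ(t)^{-1} dt) · Ṽ(s) · U(s). -/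
attribute [local instance] Matrix.linftyOpNormedRing Matrix.linftyOpNormedAlgebra

open Set Matrix

namespace CompositeStokesAux

variable {n : ℕ}

/-- Entrywise derivative of a matrix-valued path. -/
lemma entry_hasDerivAt {X : ℝ → Matrix (Fin n) (Fin n) ℂ} {D : Matrix (Fin n) (Fin n) ℂ}
    {s : ℝ} (h : HasDerivAt X D s) (i j : Fin n) :
    HasDerivAt (fun t => X t i j) (D i j) s := by
  let L : Matrix (Fin n) (Fin n) ℂ →L[ℝ] ℂ :=
    LinearMap.toContinuousLinearMap
      { toFun := fun M => M i j
        map_add' := fun _ _ => rfl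
        map_smul' := fun _ _ => rfl }
  have := (L.hasFDerivAt (x := X s)).comp_hasDerivAt s h
  exact this

/-- Jacobi-type formula: the algebraic identity behind Liouville's theorem. -/
lemma jacobi (M C : Matrix (Fin n) (Fin n) ℂ) :
    (∑ σ : Equiv.Perm (Fin n), ((Equiv.Perm.sign σ : ℤ) : ℂ) *
      ∑ i : Fin n, (∏ j ∈ Finset.univ.erase i, M (σ j) j) * (M * C) (σ i) i)
    = M.det * C.trace := by
  simp_rw [Finset.mul_sum]
  rw [Finset.sum_comm]
  have hcol : ∀ i : Fin n,
      (∑ σ : Equiv.Perm (Fin n), ((Equiv.Perm.sign σ : ℤ) : ℂ) *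
        ((∏ j ∈ Finset.univ.erase i, M (σ j) j) * (M * C) (σ i) i))
      = (M.updateCol i (fun k => (M * C) k i)).det := by
    intro i
    rw [Matrix.det_apply']
    refine Finset.sum_congr rfl fun σ _ => ?_
    congr 1
    rw [← Finset.mul_prod_erase _ _ (Finset.mem_univ i)]
    rw [Matrix.updateCol_apply, if_pos rfl, mul_comm]
    congr 1
    refine Finset.prod_congr rfl fun j hj => ?_
    rw [Matrix.updateCol_apply, if_neg (Finset.mem_erase.mp hj).1]
  calc (∑ i : Fin n, ∑ σ : Equiv.Perm (Fin n), ((Equiv.Perm.sign σ : ℤ) : ℂ) *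
        ((∏ j ∈ Finset.univ.erase i, M (σ j) j) * (M * C) (σ i) i))
      = ∑ i : Fin n, (M.updateCol i (fun k => (M * C) k i)).det := by
        exact Finset.sum_congr rfl fun i _ => hcol i
    _ = ∑ i : Fin n, (M.adjugate *ᵥ (fun k => (M * C) k i)) i := by
        refine Finset.sum_congr rfl fun i _ => ?_
        rw [← Matrix.cramer_eq_adjugate_mulVec, Matrix.cramer_apply]
    _ = (M.adjugate * (M * C)).trace := by
        simp [Matrix.trace, Matrix.diag, Matrix.mulVec, Matrix.mul_apply,
          dotProduct]
    _ = M.det * C.trace := by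
        rw [← Matrix.mul_assoc, Matrix.adjugate_mul, Matrix.smul_mul, Matrix.one_mul,
          Matrix.trace_smul, smul_eq_mul]

/-- Derivative of the determinant along a differentiable path. -/
lemma det_hasDerivAt {X : ℝ → Matrix (Fin n) (Fin n) ℂ} {C : Matrix (Fin n) (Fin n) ℂ}
    {s : ℝ} (h : HasDerivAt X (X s * C) s) :
    HasDerivAt (fun t => (X t).det) ((X s).det * C.trace) s := by
  have hfun : (fun t => (X t).det)
      = fun t => ∑ σ : Equiv.Perm (Fin n), ((Equiv.Perm.sign σ : ℤ) : ℂ) *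
          ∏ i : Fin n, X t (σ i) i := by
    funext t; rw [Matrix.det_apply']
  rw [hfun, ← jacobi (X s) C]
  refine HasDerivAt.fun_sum fun σ _ => ?_
  exact (HasDerivAt.fun_finsetProd fun j _ => entry_hasDerivAt h (σ j) j).const_mul _

/-- Right multiplication by a bounded element is Lipschitz. -/
lemma lipschitz_mul_right {E : Type*} [NormedRing E] {c : E} {M : ℝ}
    (hc : ‖c‖ ≤ M) : LipschitzWith (Real.toNNReal M) (fun x : E => x * c) := by
  refine LipschitzWith.of_dist_le_mul fun x y => ?_
  rw [dist_eq_norm, dist_eq_norm, ← sub_mul]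
  calc ‖(x - y) * c‖ ≤ ‖x - y‖ * ‖c‖ := norm_mul_le _ _
    _ ≤ ‖x - y‖ * M := by
        exact mul_le_mul_of_nonneg_left hc (norm_nonneg _)
    _ ≤ ‖x - y‖ * (Real.toNNReal M) := by
        exact mul_le_mul_of_nonneg_left (Real.le_coe_toNNReal M) (norm_nonneg _)
    _ = (Real.toNNReal M) * ‖x - y‖ := mul_comm _ _

/-- Uniqueness for linear (right-multiplication) ODEs on `[0,1]`. -/
lemma ode_unique {E : Type*} [NormedRing E] [NormedSpace ℝ E]
    (D : ℝ → E) (hD : Continuous D) {M : ℝ} (hM : ∀ t, ‖D t‖ ≤ M)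
    (f g : ℝ → E)
    (hf : ∀ s ∈ Icc (0:ℝ) 1, HasDerivAt f (f s * D s) s)
    (hg : ∀ s ∈ Icc (0:ℝ) 1, HasDerivAt g (g s * D s) s)
    (h0 : f 0 = g 0) : ∀ s ∈ Icc (0:ℝ) 1, f s = g s := by
  have key := ODE_solution_unique (v := fun t x => x * D t)
    (fun t => lipschitz_mul_right (hM t))
    (fun s hs => ((hf s hs).continuousAt).continuousWithinAt)
    (fun t ht => ((hf t (Ico_subset_Icc_self ht)).hasDerivWithinAt))
    (fun s hs => ((hg s hs).continuousAt).continuousWithinAt)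
    (fun t ht => ((hg t (Ico_subset_Icc_self ht)).hasDerivWithinAt))
    h0
  exact fun s hs => key hs

/-- Liouville: the determinant of the solution of a linear ODE is invertible. -/
lemma isUnit_det_of_linear_ode {X C : ℝ → Matrix (Fin n) (Fin n) ℂ}
    (hC : Continuous C)
    (hX : ∀ s ∈ Icc (0:ℝ) 1, HasDerivAt X (X s * C s) s) (hX0 : X 0 = 1) :
    ∀ s ∈ Icc (0:ℝ) 1, IsUnit (X s).det := by
  set pr : ℝ → ℝ := fun t => (projIcc (0:ℝ) 1 zero_le_one t : ℝ) with hpr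
  have hprc : Continuous pr := continuous_subtype_val.comp continuous_projIcc
  have hprm : ∀ t, pr t ∈ Icc (0:ℝ) 1 := fun t => (projIcc (0:ℝ) 1 zero_le_one t).2
  have hpr_eq : ∀ t ∈ Icc (0:ℝ) 1, pr t = t := fun t ht => by
    simp [hpr, projIcc_of_mem zero_le_one ht]
  set c : ℝ → ℂ := fun t => (C (pr t)).trace with hc
  have hccont : Continuous c := (hC.comp hprc).matrix_trace
  obtain ⟨M, hM⟩ :=
    (isCompact_Icc (a := (0:ℝ)) (b := 1)).exists_bound_of_continuousOn hccont.continuousOn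
  have hMall : ∀ t, ‖c t‖ ≤ M := by
    intro t
    have h1 : c (pr t) = c t := by
      simp only [hc]
      rw [hpr_eq (pr t) (hprm t)]
    calc ‖c t‖ = ‖c (pr t)‖ := by rw [h1]
      _ ≤ M := hM _ (hprm t)
  set g : ℝ → ℂ := fun s => Complex.exp (∫ t in (0:ℝ)..s, c t) with hg
  have hg' : ∀ s, HasDerivAt g (g s * c s) s := fun s => by
    have := ((hccont.integral_hasStrictDerivAt 0 s).hasDerivAt).cexp
    simpa [hg] using this
  have hdet : ∀ s ∈ Icc (0:ℝ) 1, HasDerivAt (fun t => (X t).det)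
      ((X s).det * c s) s := by
    intro s hs
    have h2 : c s = (C s).trace := by
      rw [show c s = (C (pr s)).trace from rfl, hpr_eq s hs]
    rw [h2]
    exact det_hasDerivAt (hX s hs)
  have huniq := ode_unique c hccont hMall (fun t => (X t).det) g hdet
    (fun s _ => hg' s)
    (by simp [hX0, hg])
  intro s hs
  have h3 : (X s).det = g s := huniq s hs
  rw [isUnit_iff_ne_zero, h3]
  exact Complex.exp_ne_zero _

/-- The key algebraic identity for the derivative of `K * Vt * U`. -/
lemma alg_identity (k v u a b b0 vi ui : Matrix (Fin n) (Fin n) ℂ)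
    (hv : vi * v = 1) (hu : ui * u = 1) :
    (k * (v * (u * b * ui - b0) * vi) * v + k * (v * b0)) * u + k * v * (u * a)
      = k * v * u * (a + b) := by
  have hv' : ∀ x : Matrix (Fin n) (Fin n) ℂ, vi * (v * x) = x := fun x => by
    rw [← mul_assoc, hv, one_mul]
  have hu' : ∀ x : Matrix (Fin n) (Fin n) ℂ, ui * (u * x) = x := fun x => by
    rw [← mul_assoc, hu, one_mul]
  simp only [mul_sub, sub_mul, mul_add, add_mul, mul_assoc, hv', hu', hv, hu, mul_one]
  abel

end CompositeStokesAux

open Set Matrix CompositeStokesAux in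
/-- Composite Stokes theorem (ODE form): the composite holonomy `T` (solution of
`T' = T (A + B)`, `T 0 = 1`) equals the path-ordered exponential of the conjugated
intertwining term `Ṽ (U B U⁻¹ - B 0) Ṽ⁻¹` times the product `Ṽ U` of the two
component holonomies, where `U' = U A` and `Ṽ' = Ṽ B(0)` with identity initial
conditions. -/
theorem composite_stokes_ode {n : ℕ}
    (A B B' T U Vt K : ℝ → Matrix (Fin n) (Fin n) ℂ)
    (hA : Continuous A) (hB' : Continuous B')
    (hB : ∀ s ∈ Set.Icc (0:ℝ) 1, HasDerivAt B (B' s) s)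
    (hU : ∀ s ∈ Set.Icc (0:ℝ) 1, HasDerivAt U (U s * A s) s) (hU0 : U 0 = 1)
    (hVt : ∀ s ∈ Set.Icc (0:ℝ) 1, HasDerivAt Vt (Vt s * B 0) s) (hVt0 : Vt 0 = 1)
    (hT : ∀ s ∈ Set.Icc (0:ℝ) 1, HasDerivAt T (T s * (A s + B s)) s) (hT0 : T 0 = 1)
    (hK : ∀ s ∈ Set.Icc (0:ℝ) 1,
      HasDerivAt K
        (K s * (Vt s * (U s * B s * (U s)⁻¹ - B 0) * (Vt s)⁻¹)) s) (hK0 : K 0 = 1) :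
    ∀ s ∈ Set.Icc (0:ℝ) 1, T s = K s * Vt s * U s := by
  -- invertibility of U and Vt
  have hUdet := isUnit_det_of_linear_ode hA hU hU0
  have hVdet := isUnit_det_of_linear_ode (continuous_const : Continuous fun _ : ℝ => B 0)
    hVt hVt0
  have hUinv : ∀ s ∈ Icc (0:ℝ) 1, (U s)⁻¹ * U s = 1 :=
    fun s hs => Matrix.nonsing_inv_mul _ (hUdet s hs)
  have hVinv : ∀ s ∈ Icc (0:ℝ) 1, (Vt s)⁻¹ * Vt s = 1 :=
    fun s hs => Matrix.nonsing_inv_mul _ (hVdet s hs)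
  -- continuity of B on [0,1]
  have hBc : ContinuousOn B (Icc (0:ℝ) 1) :=
    fun s hs => ((hB s hs).continuousAt).continuousWithinAt
  -- the candidate solution
  set W : ℝ → Matrix (Fin n) (Fin n) ℂ := fun s => K s * Vt s * U s with hW
  have hW' : ∀ s ∈ Icc (0:ℝ) 1, HasDerivAt W (W s * (A s + B s)) s := by
    intro s hs
    have h := ((hK s hs).mul (hVt s hs)).mul (hU s hs)
    have e := alg_identity (K s) (Vt s) (U s) (A s) (B s) (B 0) ((Vt s)⁻¹) ((U s)⁻¹)
      (hVinv s hs) (hUinv s hs)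
    rw [hW]
    rw [Pi.mul_apply, e] at h
    exact h
  -- clamp the generator
  set pr : ℝ → ℝ := fun t => (projIcc (0:ℝ) 1 zero_le_one t : ℝ) with hpr
  have hprc : Continuous pr := continuous_subtype_val.comp continuous_projIcc
  have hprm : ∀ t, pr t ∈ Icc (0:ℝ) 1 := fun t => (projIcc (0:ℝ) 1 zero_le_one t).2
  have hpr_eq : ∀ t ∈ Icc (0:ℝ) 1, pr t = t := fun t ht => by
    simp [hpr, projIcc_of_mem zero_le_one ht]
  set D : ℝ → Matrix (Fin n) (Fin n) ℂ := fun t => A (pr t) + B (pr t) with hD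
  have hDcont : Continuous D := by
    refine ((hA.comp hprc).add (hBc.comp_continuous hprc hprm))
  obtain ⟨M, hM⟩ :=
    (isCompact_Icc (a := (0:ℝ)) (b := 1)).exists_bound_of_continuousOn hDcont.continuousOn
  have hMall : ∀ t, ‖D t‖ ≤ M := by
    intro t
    have h1 : D (pr t) = D t := by
      simp only [hD]
      rw [hpr_eq (pr t) (hprm t)]
    calc ‖D t‖ = ‖D (pr t)‖ := by rw [h1]
      _ ≤ M := hM _ (hprm t)
  have hTD : ∀ s ∈ Icc (0:ℝ) 1, HasDerivAt T (T s * D s) s := by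
    intro s hs
    have h2 : D s = A s + B s := by
      rw [show D s = A (pr s) + B (pr s) from rfl, hpr_eq s hs]
    rw [h2]
    exact hT s hs
  have hWD : ∀ s ∈ Icc (0:ℝ) 1, HasDerivAt W (W s * D s) s := by
    intro s hs
    have h2 : D s = A s + B s := by
      rw [show D s = A (pr s) + B (pr s) from rfl, hpr_eq s hs]
    rw [h2]
    exact hW' s hs
  have h0 : T 0 = W 0 := by
    simp [hW, hT0, hK0, hVt0, hU0]
  exact ode_unique D hDcont hMall T W hTD hWD h0
end

section
/- If each ψ_A(x) is an eigenvector of ∂_μ H(x) with a common eigenvalue λ_μ(x) (i.e. (∂_μ H)(x) ψ_A(x) = λ_μ(x) ψ_A(x) for all A), then the effective Hamiltonian matrix satisfies ∂_μ E(x) + [A_μ(x), E(x)] = λ_μ(x) · Id_N. -/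
open Matrix

attribute [local instance] Matrix.linftyOpNormedRing Matrix.linftyOpNormedAlgebra

/-!
Write the frame as the `n × N` matrix `Ψ` with columns `ψ_A`, so that `E = Ψᴴ H Ψ`, `𝒜 = Ψᴴ Ψ'`,
`Ψᴴ Ψ = 1` and, by invariance, `H Ψ = Ψ E`. Then
`E' = Ψ'ᴴ H Ψ + Ψᴴ H' Ψ + Ψᴴ H Ψ'`. The first term is `Ψ'ᴴ Ψ E = -𝒜 E`, since differentiating
`Ψᴴ Ψ = 1` gives `Ψ'ᴴ Ψ = -𝒜`; the middle term is `λ Ψᴴ Ψ = λ 1`; and by hermiticity the last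
term is `(H Ψ)ᴴ Ψ' = Eᴴ 𝒜 = E 𝒜`.
-/

namespace Matrix

variable {α : Type*} {m n κ : Type*}

theorem conjTranspose_transpose_of_mul_transpose_of_apply [Fintype n]
    [NonUnitalNonAssocSemiring α] [Star α] (u v : κ → n → α) (A B : κ) :
    ((of u)ᵀᴴ * (of v)ᵀ) A B = star (u A) ⬝ᵥ v B := by
  simp [mul_apply, dotProduct]

theorem mul_transpose_of [Fintype n] [NonUnitalNonAssocSemiring α] (M : Matrix m n α)
    (v : κ → n → α) :
    M * (of v)ᵀ = (of fun C => M *ᵥ v C)ᵀ := by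
  ext i C
  simp [mul_apply, mulVec, dotProduct]

theorem transpose_of_mul [Fintype κ] [CommSemiring α] (v : κ → n → α) (E : Matrix κ κ α) :
    (of v)ᵀ * E = (of fun B => ∑ C, E C B • v C)ᵀ := by
  ext i B
  simp [mul_apply, mul_comm]

end Matrix

section Calculus

variable {𝕜 : Type*} [RCLike 𝕜] {l m n : Type*} [Fintype l] [Fintype m] [Fintype n] {t : ℝ}

section

-- `HasDerivAt` only sees the product topology; any norm inducing it gives the bilinear rule.
attribute [local instance] Matrix.normedAddCommGroup Matrix.normedSpace

theorem HasDerivAt.matrix_mul {A : ℝ → Matrix l m 𝕜} {B : ℝ → Matrix m n 𝕜}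
    {A' : Matrix l m 𝕜} {B' : Matrix m n 𝕜} (hA : HasDerivAt A A' t) (hB : HasDerivAt B B' t) :
    HasDerivAt (fun s => A s * B s) (A' * B t + A t * B') t := by
  let μ : Matrix l m 𝕜 →ₗ[ℝ] Matrix m n 𝕜 →ₗ[ℝ] Matrix l n 𝕜 :=
    LinearMap.mk₂ ℝ (· * ·) Matrix.add_mul Matrix.smul_mul Matrix.mul_add
      fun c M N => Matrix.mul_smul M c N
  rw [add_comm]
  exact μ.toContinuousBilinearMap.hasDerivAt_of_bilinear (fun _ => hA) (fun _ => hB)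

end

theorem HasDerivAt.matrix_conjTranspose {A : ℝ → Matrix m n 𝕜} {A' : Matrix m n 𝕜}
    (hA : HasDerivAt A A' t) : HasDerivAt (fun s => (A s)ᴴ) A'ᴴ t :=
  hasDerivAt_pi.2 fun j => hasDerivAt_pi.2 fun i =>
    (hasDerivAt_pi.1 (hasDerivAt_pi.1 hA i) j).star

theorem HasDerivAt.matrix_conjTranspose_mul_mul {Ψ : ℝ → Matrix n m 𝕜} {H : ℝ → Matrix n n 𝕜}
    {Ψ' : Matrix n m 𝕜} {H' : Matrix n n 𝕜} (hΨ : HasDerivAt Ψ Ψ' t) (hH : HasDerivAt H H' t) :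
    HasDerivAt (fun s => (Ψ s)ᴴ * H s * Ψ s)
      (Ψ'ᴴ * H t * Ψ t + (Ψ t)ᴴ * H' * Ψ t + (Ψ t)ᴴ * H t * Ψ') t := by
  convert (hΨ.matrix_conjTranspose.matrix_mul hH).matrix_mul hΨ using 1
  simp only [Matrix.add_mul]

theorem conjTranspose_deriv_mul_eq_neg_of_isometry [DecidableEq m] {Ψ : ℝ → Matrix n m 𝕜}
    {Ψ' : Matrix n m 𝕜} (hΨ : HasDerivAt Ψ Ψ' t) (hiso : ∀ s, (Ψ s)ᴴ * Ψ s = 1) :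
    Ψ'ᴴ * Ψ t = -((Ψ t)ᴴ * Ψ') := by
  have hconst : HasDerivAt (fun s => (Ψ s)ᴴ * Ψ s) 0 t := by
    rw [funext hiso]
    exact hasDerivAt_const t 1
  exact eq_neg_of_add_eq_zero_left ((hΨ.matrix_conjTranspose.matrix_mul hΨ).unique hconst)

end Calculus

section Compression

variable {𝕜 : Type*} [RCLike 𝕜] {n κ : Type*} [Fintype n] [Fintype κ] [DecidableEq κ] {t : ℝ}

theorem hasDerivAt_compression_of_invariant {Ψ : ℝ → Matrix n κ 𝕜} {H : ℝ → Matrix n n 𝕜}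
    {E : ℝ → Matrix κ κ 𝕜} {Ψ' : Matrix n κ 𝕜} {H' : Matrix n n 𝕜} {𝒜 : Matrix κ κ 𝕜} {c : 𝕜}
    (hΨ : HasDerivAt Ψ Ψ' t) (hH : HasDerivAt H H' t) (hiso : ∀ s, (Ψ s)ᴴ * Ψ s = 1)
    (hHerm : (H t)ᴴ = H t) (hE : ∀ s, E s = (Ψ s)ᴴ * H s * Ψ s) (h𝒜 : 𝒜 = (Ψ t)ᴴ * Ψ')
    (hinv : H t * Ψ t = Ψ t * E t) (heig : H' * Ψ t = c • Ψ t) :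
    HasDerivAt E (c • 1 - (𝒜 * E t - E t * 𝒜)) t := by
  have hEherm : (E t)ᴴ = E t := by
    rw [hE, conjTranspose_mul, conjTranspose_mul, conjTranspose_conjTranspose, hHerm,
      Matrix.mul_assoc]
  have hleft : Ψ'ᴴ * H t * Ψ t = -(𝒜 * E t) := by
    rw [Matrix.mul_assoc, hinv, ← Matrix.mul_assoc,
      conjTranspose_deriv_mul_eq_neg_of_isometry hΨ hiso, h𝒜, Matrix.neg_mul]
  have hmiddle : (Ψ t)ᴴ * H' * Ψ t = c • 1 := by
    rw [Matrix.mul_assoc, heig, Matrix.mul_smul, hiso]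
  have hright : (Ψ t)ᴴ * H t * Ψ' = E t * 𝒜 := by
    rw [← hHerm, ← conjTranspose_mul, hinv, conjTranspose_mul, hEherm, h𝒜, Matrix.mul_assoc]
  convert hΨ.matrix_conjTranspose_mul_mul hH using 1
  · exact funext hE
  · rw [hleft, hmiddle, hright]
    abel

end Compression

theorem effective_hamiltonian_geometric_coinvariant_general {n N : ℕ}
    (H H' : ℝ → Matrix (Fin n) (Fin n) ℂ)
    (ψ ψ' : Fin N → ℝ → (Fin n → ℂ))
    (lam : ℝ → ℝ)
    (hHerm : ∀ t, (H t)ᴴ = H t)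
    (hH : ∀ t, HasDerivAt H (H' t) t)
    (hψ : ∀ A t, HasDerivAt (ψ A) (ψ' A t) t)
    (horth : ∀ t (A B : Fin N),
      star (ψ A t) ⬝ᵥ ψ B t = if A = B then 1 else 0)
    (E 𝒜 : ℝ → Matrix (Fin N) (Fin N) ℂ)
    (hE : ∀ t A B, E t A B = star (ψ A t) ⬝ᵥ (H t).mulVec (ψ B t))
    (h𝒜 : ∀ t A B, 𝒜 t A B = star (ψ A t) ⬝ᵥ ψ' B t)
    (hinvariant : ∀ t (B : Fin N),
      (H t).mulVec (ψ B t) = ∑ C, E t C B • ψ C t)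
    (heig : ∀ t (A : Fin N), (H' t).mulVec (ψ A t) = (lam t : ℂ) • ψ A t)
    (t₀ : ℝ) :
    ∀ A B, HasDerivAt (fun t => E t A B)
      (((lam t₀ : ℂ) • (1 : Matrix (Fin N) (Fin N) ℂ)
        - (𝒜 t₀ * E t₀ - E t₀ * 𝒜 t₀)) A B) t₀ := by
  intro A B
  let Ψ : ℝ → Matrix (Fin n) (Fin N) ℂ := fun s => (of fun C => ψ C s)ᵀ
  have hΨ : HasDerivAt Ψ (of fun C => ψ' C t₀)ᵀ t₀ :=
    hasDerivAt_pi.2 fun i => hasDerivAt_pi.2 fun C => hasDerivAt_pi.1 (hψ C t₀) i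
  have hiso : ∀ s, (Ψ s)ᴴ * Ψ s = 1 := fun s => by
    ext C D
    rw [conjTranspose_transpose_of_mul_transpose_of_apply, horth, one_apply]
  have hE' : ∀ s, E s = (Ψ s)ᴴ * H s * Ψ s := fun s => by
    ext C D
    rw [Matrix.mul_assoc, mul_transpose_of, conjTranspose_transpose_of_mul_transpose_of_apply,
      hE]
  have h𝒜' : 𝒜 t₀ = (Ψ t₀)ᴴ * (of fun C => ψ' C t₀)ᵀ := by
    ext C D
    rw [conjTranspose_transpose_of_mul_transpose_of_apply, h𝒜]
  have hinv : H t₀ * Ψ t₀ = Ψ t₀ * E t₀ := by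
    rw [mul_transpose_of, transpose_of_mul]
    simp only [hinvariant]
  have heig' : H' t₀ * Ψ t₀ = (lam t₀ : ℂ) • Ψ t₀ := by
    ext i C
    simp [Ψ, mul_transpose_of, heig]
  have key := hasDerivAt_compression_of_invariant hΨ (hH t₀) hiso (hHerm t₀) hE' h𝒜' hinv heig'
  exact hasDerivAt_pi.1 (hasDerivAt_pi.1 key A) B

/-- If each `ψ A x` is an eigenvector of `∂H x` with a common eigenvalue `λ x`, then
the effective Hamiltonian matrix satisfies `∂E + [𝒜, E] = λ • Id`. -/
theorem effective_hamiltonian_geometric_coinvariant {n N : ℕ}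
    (H H' : ℝ → Matrix (Fin n) (Fin n) ℂ)
    (ψ ψ' : Fin N → ℝ → (Fin n → ℂ))
    (lam : ℝ → ℝ) (hlam : Continuous lam)
    (hHerm : ∀ t, (H t)ᴴ = H t)
    (hH : ∀ t, HasDerivAt H (H' t) t)
    (hψ : ∀ A t, HasDerivAt (ψ A) (ψ' A t) t)
    (horth : ∀ t (A B : Fin N),
      star (ψ A t) ⬝ᵥ ψ B t = if A = B then 1 else 0)
    (E 𝒜 : ℝ → Matrix (Fin N) (Fin N) ℂ)
    (hE : ∀ t A B, E t A B = star (ψ A t) ⬝ᵥ (H t).mulVec (ψ B t))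
    (h𝒜 : ∀ t A B, 𝒜 t A B = star (ψ A t) ⬝ᵥ ψ' B t)
    (hinvariant : ∀ t (B : Fin N),
      (H t).mulVec (ψ B t) = ∑ C, E t C B • ψ C t)
    (heig : ∀ t (A : Fin N), (H' t).mulVec (ψ A t) = (lam t : ℂ) • ψ A t)
    (t₀ : ℝ) :
    ∀ A B, HasDerivAt (fun t => E t A B)
      (((lam t₀ : ℂ) • (1 : Matrix (Fin N) (Fin N) ℂ)
        - (𝒜 t₀ * E t₀ - E t₀ * 𝒜 t₀)) A B) t₀ :=
  effective_hamiltonian_geometric_coinvariant_general H H' ψ ψ' lam hHerm hH hψ horth E 𝒜 hE h𝒜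
    hinvariant heig t₀
end
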